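/- (Theorem 1, σ = 0 case: distributional Pollaczek–Khinchine formula.) Suppose 0 < ν̄ < c and σ = 0, and set ρ = ν̄/c. Let G be the probability measure on (0,∞) with density x ↦ ν((x,∞))/ν̄, and define the probability measure W = Σ_{n=0}^∞ (1 − ρ) ρⁿ G^{∗n}, i.e. the law of Σ_{n=1}^N Y_n where N is geometric with P[N = n] = (1 − ρ)ρⁿ, the Y_i have law G, and all are independent. Then for every α > 0, ∫ e^{−αx} W(dx) = α(c − ν̄)/φ(α). -/

import Mathlib

/-!
The Laplace transform turns convolution into multiplication, so the transform of `W` is the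
geometric series `(1 - ρ) ∑ (ρ Ĝ(α))ⁿ = (1 - ρ) / (1 - ρ Ĝ(α))`. By the layer-cake formula,
`∫₀^∞ ν((x,∞)) e^{-αx} dx = ∫ (1 - e^{-αy}) / α ν(dy)`, so `ν̄ α Ĝ(α) = cα - φ(α)`; and
`1 - e^{-αy} < αy` gives `ρ Ĝ(α) < 1`, so the series converges to `α (c - ν̄) / φ(α)`.
-/

open MeasureTheory Set Real
open scoped ENNReal

/-- The `n`-fold convolution power of a measure on `ℝ`, with `G^{∗0} = δ₀`. -/
noncomputable def convPow (G : Measure ℝ) : ℕ → Measure ℝ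
  | 0 => Measure.dirac 0
  | n + 1 => Measure.conv (convPow G n) G

/-- Valued in `ℝ≥0∞`, so that it is defined without integrability conditions. -/
noncomputable def laplaceTransform (μ : Measure ℝ) (α : ℝ) : ℝ≥0∞ :=
  ∫⁻ x, ENNReal.ofReal (exp (-(α * x))) ∂μ

lemma laplaceTransform_conv (μ ν : Measure ℝ) [SFinite ν] (α : ℝ) :
    laplaceTransform (μ.conv ν) α = laplaceTransform μ α * laplaceTransform ν α := by
  have h : ∀ x y : ℝ, ENNReal.ofReal (exp (-(α * (x + y))))
      = ENNReal.ofReal (exp (-(α * x))) * ENNReal.ofReal (exp (-(α * y))) := fun x y => by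
    rw [← ENNReal.ofReal_mul (exp_pos _).le, ← exp_add]; ring_nf
  have hmeas : Measurable fun x : ℝ => ENNReal.ofReal (exp (-(α * x))) := by fun_prop
  simp only [laplaceTransform, Measure.lintegral_conv hmeas, h, lintegral_const_mul _ hmeas]
  exact lintegral_mul_const _ hmeas

lemma laplaceTransform_convPow (G : Measure ℝ) [SFinite G] (α : ℝ) (n : ℕ) :
    laplaceTransform (convPow G n) α = laplaceTransform G α ^ n := by
  induction n with
  | zero => simp [convPow, laplaceTransform]
  | succ n ih => rw [convPow, laplaceTransform_conv, ih, pow_succ]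

noncomputable def geometricCompound (G : Measure ℝ) (ρ : ℝ) : Measure ℝ :=
  Measure.sum fun n : ℕ => ENNReal.ofReal ((1 - ρ) * ρ ^ n) • convPow G n

lemma laplaceTransform_geometricCompound (G : Measure ℝ) [SFinite G] {ρ : ℝ} (hρ : 0 ≤ ρ)
    (α : ℝ) :
    laplaceTransform (geometricCompound G ρ) α
      = ENNReal.ofReal (1 - ρ) * (1 - ENNReal.ofReal ρ * laplaceTransform G α)⁻¹ := by
  simp only [geometricCompound, laplaceTransform, lintegral_sum_measure, lintegral_smul_measure]
  simp only [← laplaceTransform.eq_1, laplaceTransform_convPow, smul_eq_mul,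
    ENNReal.ofReal_mul' (pow_nonneg hρ _), ENNReal.ofReal_pow hρ, mul_assoc, ← mul_pow,
    ENNReal.tsum_mul_left, ENNReal.tsum_geometric]

lemma integral_exp_neg_mul_geometricCompound (G : Measure ℝ) [SFinite G] {ρ L α : ℝ}
    (hρ : 0 ≤ ρ) (hρ1 : ρ ≤ 1) (hL : 0 ≤ L) (hGL : laplaceTransform G α = ENNReal.ofReal L)
    (hρL : ρ * L < 1) :
    ∫ x, exp (-(α * x)) ∂geometricCompound G ρ = (1 - ρ) / (1 - ρ * L) := by
  rw [integral_eq_lintegral_of_nonneg_ae (.of_forall fun x => (exp_pos _).le)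
      (by fun_prop), ← laplaceTransform, laplaceTransform_geometricCompound G hρ, hGL,
    ← ENNReal.ofReal_mul hρ, ← ENNReal.ofReal_one, ← ENNReal.ofReal_sub _ (mul_nonneg hρ hL),
    ENNReal.toReal_mul, ENNReal.toReal_inv, ENNReal.toReal_ofReal (sub_nonneg.2 hρ1),
    ENNReal.toReal_ofReal (sub_nonneg.2 hρL.le), div_eq_mul_inv]

lemma integral_exp_neg_mul_interval {α : ℝ} (hα : α ≠ 0) (y : ℝ) :
    ∫ t in (0 : ℝ)..y, exp (-(α * t)) = (1 - exp (-(α * y))) / α := by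
  have hderiv : ∀ t : ℝ, HasDerivAt (fun t => -exp (-(α * t)) / α) (exp (-(α * t))) t := by
    intro t
    have hlin : HasDerivAt (fun t => -(α * t)) (-α) t := by
      simpa using (hasDerivAt_id' t).const_mul (-α)
    exact (hlin.exp.neg.div_const α).congr_deriv (by field_simp)
  rw [intervalIntegral.integral_eq_sub_of_hasDerivAt (fun t _ => hderiv t)
    ((by fun_prop : Continuous fun t => exp (-(α * t))).intervalIntegrable 0 y)]
  simp only [mul_zero, neg_zero, exp_zero]
  ring

lemma setLIntegral_measure_Ioi_mul_eq (ν : Measure ℝ) {g : ℝ → ℝ}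
    (hg : ∀ t > 0, IntervalIntegrable g volume 0 t)
    (hg0 : ∀ᵐ t ∂volume.restrict (Ioi 0), 0 ≤ g t) :
    ∫⁻ x in Ioi 0, ν (Ioi x) * ENNReal.ofReal (g x)
      = ∫⁻ y in Ioi 0, ENNReal.ofReal (∫ t in (0 : ℝ)..y, g t) ∂ν := by
  rw [lintegral_comp_eq_lintegral_meas_lt_mul (ν.restrict (Ioi 0)) (f := fun y => y)
    ((ae_restrict_mem measurableSet_Ioi).mono fun x hx => le_of_lt hx) aemeasurable_id hg hg0]
  refine setLIntegral_congr_fun measurableSet_Ioi fun x hx => ?_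
  change ν (Ioi x) * _ = ν.restrict (Ioi 0) (Ioi x) * _
  rw [Measure.restrict_apply measurableSet_Ioi,
    inter_eq_left.2 (Ioi_subset_Ioi (le_of_lt hx))]

lemma laplaceTransform_withDensity_tail (ν : Measure ℝ) (m : ℝ≥0∞) {α : ℝ} (hα : α ≠ 0) :
    laplaceTransform (volume.withDensity fun x => if 0 < x then ν (Ioi x) / m else 0) α
      = m⁻¹ * ∫⁻ y in Ioi 0, ENNReal.ofReal ((1 - exp (-(α * y))) / α) ∂ν := by
  have htail : Measurable fun x : ℝ => ν (Ioi x) :=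
    Antitone.measurable fun x y hxy => measure_mono (Ioi_subset_Ioi hxy)
  have hdens : (fun x : ℝ => if 0 < x then ν (Ioi x) / m else 0)
      = (Ioi 0).indicator (m⁻¹ • fun x => ν (Ioi x)) := by
    ext x
    simp [indicator_apply, ENNReal.div_eq_inv_mul]
  rw [hdens, withDensity_indicator measurableSet_Ioi, withDensity_smul _ htail, laplaceTransform,
    lintegral_smul_measure, lintegral_withDensity_eq_lintegral_mul _ htail
      (by fun_prop), smul_eq_mul]
  simp only [Pi.mul_apply]
  rw [setLIntegral_measure_Ioi_mul_eq ν
    (fun t _ => (by fun_prop : Continuous fun t => exp (-(α * t))).intervalIntegrable 0 t)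
    (.of_forall fun t => (exp_pos _).le)]
  simp only [integral_exp_neg_mul_interval hα]

lemma one_sub_exp_neg_mul_nonneg {α x : ℝ} (hα : 0 ≤ α) (hx : 0 ≤ x) :
    0 ≤ 1 - exp (-(α * x)) :=
  sub_nonneg.2 (exp_le_one_iff.2 (neg_nonpos.2 (mul_nonneg hα hx)))

section OneSubExp

variable {ν : Measure ℝ}

lemma integrableOn_one_sub_exp_neg_mul (hint : IntegrableOn (fun x => x) (Ioi 0) ν) {α : ℝ}
    (hα : 0 ≤ α) : IntegrableOn (fun x => 1 - exp (-(α * x))) (Ioi 0) ν := by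
  refine (hint.const_mul α).mono (by fun_prop) ?_
  filter_upwards [ae_restrict_mem measurableSet_Ioi] with x (hx : 0 < x)
  have hαx : 0 ≤ α * x := mul_nonneg hα hx.le
  rw [norm_of_nonneg (one_sub_exp_neg_mul_nonneg hα hx.le), norm_of_nonneg hαx]
  linarith [one_sub_le_exp_neg (α * x)]

lemma setIntegral_one_sub_exp_neg_mul_nonneg {α : ℝ} (hα : 0 ≤ α) :
    0 ≤ ∫ x in Ioi 0, (1 - exp (-(α * x))) ∂ν :=
  setIntegral_nonneg measurableSet_Ioi fun _ hx => one_sub_exp_neg_mul_nonneg hα (le_of_lt hx)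

lemma setIntegral_one_sub_exp_neg_mul_lt (hint : IntegrableOn (fun x => x) (Ioi 0) ν)
    (hpos : 0 < ∫ x in Ioi 0, x ∂ν) {α : ℝ} (hα : 0 < α) :
    ∫ x in Ioi 0, (1 - exp (-(α * x))) ∂ν < α * ∫ x in Ioi 0, x ∂ν := by
  have hν : ν (Ioi 0) ≠ 0 := fun h => by
    simp [Measure.restrict_eq_zero.2 h] at hpos
  have hgap : ∀ x ∈ Ioi (0 : ℝ), 0 < α * x - (1 - exp (-(α * x))) := fun x (hx : 0 < x) => by
    linarith [one_sub_lt_exp_neg (mul_pos hα hx).ne']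
  have hint' := integrableOn_one_sub_exp_neg_mul hint hα.le
  have hdiff : 0 < ∫ x in Ioi 0, (α * x - (1 - exp (-(α * x)))) ∂ν := by
    refine (setIntegral_pos_iff_support_of_nonneg_ae ?_ ((hint.const_mul α).sub hint')).2 ?_
    · filter_upwards [ae_restrict_mem measurableSet_Ioi] with x hx using (hgap x hx).le
    · refine (pos_iff_ne_zero.2 hν).trans_le (measure_mono fun x hx => ⟨?_, hx⟩)
      exact (hgap x hx).ne'
  rw [integral_sub (hint.const_mul α) hint', integral_const_mul] at hdiff
  linarith

end OneSubExp

theorem stmt10_general (ν : Measure ℝ)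
    (hint : IntegrableOn (fun x => x) (Ioi 0) ν)
    (νbar : ℝ) (hνbar : νbar = ∫ x in Ioi (0:ℝ), x ∂ν)
    (c : ℝ)
    (h0 : 0 < νbar) (h1 : νbar < c)
    (φ : ℝ → ℝ)
    (hφ : ∀ α : ℝ, φ α = c * α
        - ∫ x in Ioi (0:ℝ), (1 - Real.exp (-(α * x))) ∂ν)
    (ρ : ℝ) (hρ : ρ = νbar / c)
    (G : Measure ℝ)
    (hG : G = volume.withDensity
        (fun x => if 0 < x then ν (Ioi x) / ENNReal.ofReal νbar else 0))
    (W : Measure ℝ)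
    (hW : W = Measure.sum
        (fun n : ℕ => (ENNReal.ofReal ((1 - ρ) * ρ ^ n)) • convPow G n)) :
    ∀ α : ℝ, 0 < α →
      ∫ x, Real.exp (-(α * x)) ∂W = α * (c - νbar) / φ α := by
  intro α hα
  have hc : 0 < c := h0.trans h1
  set J := ∫ x in Ioi (0:ℝ), (1 - exp (-(α * x))) ∂ν with hJ
  have hJ_nonneg : 0 ≤ J := setIntegral_one_sub_exp_neg_mul_nonneg hα.le
  have hJ_lt : J < α * νbar := hνbar ▸ setIntegral_one_sub_exp_neg_mul_lt hint (hνbar ▸ h0) hα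
  have : SFinite G := by rw [hG]; infer_instance
  have hLG : laplaceTransform G α = ENNReal.ofReal (J / α / νbar) := by
    rw [hG, laplaceTransform_withDensity_tail ν _ hα.ne', ← ofReal_integral_eq_lintegral_ofReal
      ((integrableOn_one_sub_exp_neg_mul hint hα.le).div_const α)
      ((ae_restrict_mem measurableSet_Ioi).mono fun x (hx : 0 < x) =>
        div_nonneg (one_sub_exp_neg_mul_nonneg hα.le hx.le) hα.le),
      ← ENNReal.ofReal_inv_of_pos h0, ← ENNReal.ofReal_mul (inv_nonneg.2 h0.le), integral_div, ← hJ]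
    ring_nf
  have hρ0 : 0 ≤ ρ := hρ ▸ div_nonneg h0.le hc.le
  have hρ1 : ρ ≤ 1 := hρ ▸ (div_le_one hc).2 h1.le
  have hρJ : ρ * (J / α / νbar) < 1 := by
    rw [hρ, show νbar / c * (J / α / νbar) = J / (α * c) by field_simp, div_lt_one (by positivity)]
    nlinarith
  rw [show W = geometricCompound G ρ from hW, integral_exp_neg_mul_geometricCompound G hρ0 hρ1 (by positivity) hLG hρJ, hφ, ← hJ, hρ]
  field_simp

/-- **Theorem 1, `σ = 0` case: distributional Pollaczek–Khinchine
formula.** Suppose `0 < ν̄ < c` and `σ = 0`, and set `ρ = ν̄/c`. Let `G` be the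
probability measure on `(0,∞)` with density `x ↦ ν((x,∞))/ν̄` and
`W = Σ_{n=0}^∞ (1 − ρ) ρⁿ G^{∗n}`, i.e. the law of `Σ_{n=1}^N Yₙ` with `N`
geometric`(1 − ρ)`, `Yᵢ ∼ G`, all independent. Then for every `α > 0`,
`∫ e^{−αx} W(dx) = α(c − ν̄)/φ(α)`, where `φ(α) = cα − ∫_{(0,∞)} (1 − e^{−αx}) ν(dx)`. -/
theorem stmt10 (ν : Measure ℝ) (hν : ν (Iic 0) = 0)
    (hint : IntegrableOn (fun x => x) (Ioi 0) ν)
    (νbar : ℝ) (hνbar : νbar = ∫ x in Ioi (0:ℝ), x ∂ν)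
    (c : ℝ) (hc : 0 < c)
    (h0 : 0 < νbar) (h1 : νbar < c)
    (φ : ℝ → ℝ)
    (hφ : ∀ α : ℝ, φ α = c * α
        - ∫ x in Ioi (0:ℝ), (1 - Real.exp (-(α * x))) ∂ν)
    (ρ : ℝ) (hρ : ρ = νbar / c)
    (G : Measure ℝ)
    (hG : G = volume.withDensity
        (fun x => if 0 < x then ν (Ioi x) / ENNReal.ofReal νbar else 0))
    (W : Measure ℝ)
    (hW : W = Measure.sum
        (fun n : ℕ => (ENNReal.ofReal ((1 - ρ) * ρ ^ n)) • convPow G n)) :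
    ∀ α : ℝ, 0 < α →
      ∫ x, Real.exp (-(α * x)) ∂W = α * (c - νbar) / φ α :=
  stmt10_general ν hint νbar hνbar c h0 h1 φ hφ ρ hρ G hG W hW
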